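/- Let u₁,u₂,u₃,v₁,v₂,v₃ be nonzero real numbers and let J be the 6×6 Jacobian matrix of the map x(u,v) = (u₁v₂, u₃v₂, u₃v₁, u₂v₁, u₂v₃, u₁v₃) with respect to u₁,u₂,u₃,v₁,v₂,v₃. Then for every choice of five of the six rows of J, the chosen five rows are linearly independent; equivalently, every 5×6 submatrix of J obtained by deleting one row has rank 5. -/

import Mathlib

/-- The map x : ℝ³ × ℝ³ → ℝ⁶, with the six variables u₁,u₂,u₃,v₁,v₂,v₃
packed as `p 0, ..., p 5`:
x(u,v) = (u₁v₂, u₃v₂, u₃v₁, u₂v₁, u₂v₃, u₁v₃). -/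
noncomputable def xMap (p : Fin 6 → ℝ) : Fin 6 → ℝ :=
  ![p 0 * p 4, p 2 * p 4, p 2 * p 3, p 1 * p 3, p 1 * p 5, p 0 * p 5]

/-- The 6×6 Jacobian matrix of `xMap` at `p`. -/
noncomputable def xJacobian (p : Fin 6 → ℝ) : Matrix (Fin 6) (Fin 6) ℝ :=
  Matrix.of fun m k => fderiv ℝ (fun q => xMap q m) p (Pi.single k 1)

/-!
The components of `x` satisfy `x₁x₃x₅ = x₂x₄x₆` identically, so differentiating gives a linear
relation among the rows of the Jacobian whose coefficients are products of the `xᵢ`, hence all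
nonzero. Each row is therefore in the span of the other five, so every choice of five rows spans
the whole row space. One lower triangular 5×5 minor shows that this space has dimension 5, and
five vectors spanning a 5-dimensional space are independent.
-/

open Submodule

theorem span_range_subtype_ne_eq_of_sum_smul_eq_zero {ι K V : Type*} [Fintype ι] [DecidableEq ι]
    [DivisionRing K] [AddCommGroup V] [Module K V] {v : ι → V} {c : ι → K}
    (hrel : ∑ i, c i • v i = 0) {r : ι} (hr : c r ≠ 0) :
    span K (Set.range fun i : {i // i ≠ r} => v i) = span K (Set.range v) := by
  refine le_antisymm (span_mono (Set.range_comp_subset_range _ v)) (span_le.2 ?_)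
  rintro _ ⟨i, rfl⟩
  by_cases hi : i = r
  · subst hi
    rw [Fintype.sum_eq_add_sum_subtype_ne _ i] at hrel
    refine (smul_mem_iff _ hr).1 ?_
    rw [eq_neg_of_add_eq_zero_left hrel]
    exact neg_mem (sum_mem fun j _ => smul_mem _ _ (subset_span ⟨j, rfl⟩))
  · exact subset_span ⟨⟨i, hi⟩, rfl⟩

theorem LinearIndependent.subtype_ne_of_sum_smul_eq_zero {ι K V : Type*} [Fintype ι]
    [DecidableEq ι] [DivisionRing K] [AddCommGroup V] [Module K V] {v : ι → V} {c : ι → K}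
    (hc : ∀ i, c i ≠ 0) (hrel : ∑ i, c i • v i = 0) {r₀ : ι}
    (h₀ : LinearIndependent K fun i : {i // i ≠ r₀} => v i) (r : ι) :
    LinearIndependent K fun i : {i // i ≠ r} => v i := by
  rw [linearIndependent_iff_card_eq_finrank_span] at h₀ ⊢
  rw [Set.finrank, span_range_subtype_ne_eq_of_sum_smul_eq_zero hrel (hc r)]
  rw [Set.finrank, span_range_subtype_ne_eq_of_sum_smul_eq_zero hrel (hc r₀)] at h₀
  simpa [Fintype.card_subtype_compl] using h₀

theorem Matrix.linearIndependent_rows_of_det_submatrix_ne_zero {m n k K : Type*} [Fintype k]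
    [DecidableEq k] [CommRing K] [IsDomain K] {M : Matrix m n K} {e : k → m} {f : k → n}
    (h : (M.submatrix e f).det ≠ 0) : LinearIndependent K fun i => M (e i) :=
  (linearIndependent_rows_of_det_ne_zero h).of_comp (LinearMap.funLeft K K f)

theorem fderiv_apply_mul_apply {𝕜 ι : Type*} [NontriviallyNormedField 𝕜] [Fintype ι]
    (i j : ι) (p v : ι → 𝕜) :
    fderiv 𝕜 (fun q : ι → 𝕜 => q i * q j) p v = v i * p j + p i * v j := by
  rw [fderiv_fun_mul (differentiableAt_apply i p) (differentiableAt_apply j p),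
    (hasFDerivAt_apply i p).fderiv, (hasFDerivAt_apply j p).fderiv]
  simp only [add_apply, smul_apply,
    ContinuousLinearMap.proj_apply, smul_eq_mul]
  ring

theorem xJacobian_eq (p : Fin 6 → ℝ) :
    xJacobian p = !![p 4, 0, 0, 0, p 0, 0;
                     0, 0, p 4, 0, p 2, 0;
                     0, 0, p 3, p 2, 0, 0;
                     0, p 3, 0, p 1, 0, 0;
                     0, p 5, 0, 0, 0, p 1;
                     p 5, 0, 0, 0, 0, p 0] := by
  ext m k
  fin_cases m <;> fin_cases k <;> simp [xJacobian, xMap, fderiv_apply_mul_apply]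

/-- The gradient of `x₁x₃x₅ - x₂x₄x₆` evaluated at `x = xMap p`. -/
noncomputable def xRelation (p : Fin 6 → ℝ) : Fin 6 → ℝ :=
  let x := xMap p
  ![x 2 * x 4, -(x 3 * x 5), x 0 * x 4, -(x 1 * x 5), x 0 * x 2, -(x 1 * x 3)]

theorem xRelation_ne_zero {p : Fin 6 → ℝ} (hp : ∀ i, p i ≠ 0) (m : Fin 6) :
    xRelation p m ≠ 0 := by
  fin_cases m <;> simp [xRelation, xMap, hp]

theorem sum_xRelation_smul_xJacobian (p : Fin 6 → ℝ) :
    ∑ m, xRelation p m • xJacobian p m = 0 := by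
  ext k
  fin_cases k <;> simp [xRelation, xMap, xJacobian_eq, Fin.sum_univ_succ] <;> ring

/-- Columns ordered so that the minor is lower triangular with diagonal `p₀, p₄, p₂, p₃, p₁`. -/
theorem det_xJacobian_submatrix_ne_zero {p : Fin 6 → ℝ} (hp : ∀ i, p i ≠ 0) :
    ((xJacobian p).submatrix (Fin.last 5).succAbove ![4, 2, 3, 1, 5]).det ≠ 0 := by
  rw [Fin.succAbove_last, Matrix.det_of_isLowerTriangular]
  · simp [Fin.prod_univ_succ, xJacobian_eq, hp]
  · intro i j hij
    rw [OrderDual.toDual_lt_toDual] at hij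
    fin_cases i <;> fin_cases j <;> simp_all [xJacobian_eq]

theorem linearIndependent_xJacobian_rows_ne {p : Fin 6 → ℝ} (hp : ∀ i, p i ≠ 0) (r : Fin 6) :
    LinearIndependent ℝ fun m : {m // m ≠ r} => xJacobian p m := by
  refine (LinearIndependent.subtype_ne_of_sum_smul_eq_zero (xRelation_ne_zero hp)
    (sum_xRelation_smul_xJacobian p) (r₀ := Fin.last 5) ?_) r
  rw [← linearIndependent_equiv (finSuccAboveEquiv (Fin.last 5))]
  exact Matrix.linearIndependent_rows_of_det_submatrix_ne_zero (det_xJacobian_submatrix_ne_zero hp)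

/-- Any five of the six rows of the Jacobian are linearly independent;
equivalently, every 5×6 submatrix obtained by deleting one row has rank 5. -/
theorem jacobian_any_five_rows_linearIndependent (p : Fin 6 → ℝ)
    (hp : ∀ i, p i ≠ 0) (r : Fin 6) :
    LinearIndependent ℝ (fun m : {m : Fin 6 // m ≠ r} => xJacobian p m.1) ∧
    ((xJacobian p).submatrix (Subtype.val : {m : Fin 6 // m ≠ r} → Fin 6) id).rank = 5 := by
  have hli := linearIndependent_xJacobian_rows_ne hp r
  refine ⟨hli, ?_⟩
  rw [LinearIndependent.rank_matrix (M := (xJacobian p).submatrix Subtype.val id) hli]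
  simp
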